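/- Let H be a complex Hilbert space and A, B ∈ B(H) with A∘B ≠ 0 and A∘B = λ • (B∘A) for some λ ∈ ℂ. If both A and B are self-adjoint and at least one of them is positive, then λ = 1, i.e. A∘B = B∘A. -/

import Mathlib

/-!
Taking adjoints in `AB = λ BA` gives `BA = conj λ • AB`, so `|λ| = 1`, and for `λ = μ²` the
operator `conj μ • AB` is self-adjoint; being nonzero, it has a nonzero real spectral value `t`,
and then `μ t` lies in the spectrum of `AB`. If `A ≥ 0`, the nonzero spectrum of `AB` is that of
the self-adjoint operator `√A B √A`, hence real (for `B ≥ 0` use `σ(AB) \ {0} = σ(BA) \ {0}`).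
So `μ` is real, `μ = ±1` and `λ = 1`.
-/

open ComplexConjugate

section StarModule

variable {M : Type*} [AddCommGroup M] [Module ℂ M] [StarAddMonoid M] [StarModule ℂ M]

lemma star_eq_conj_smul_of_eq_smul_star {c : M} {lam : ℂ} (h : c = lam • star c) :
    star c = conj lam • c := by
  conv_lhs => rw [h]
  rw [star_smul, star_star]
  rfl

lemma norm_eq_one_of_eq_smul_star {c : M} {lam : ℂ} (hc : c ≠ 0) (h : c = lam • star c) :
    ‖lam‖ = 1 := by
  have hfix : (lam * conj lam) • c = c := by
    rw [mul_smul, ← star_eq_conj_smul_of_eq_smul_star h, ← h]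
  have : ((‖lam‖ ^ 2 : ℝ) - 1 : ℂ) • c = 0 := by
    rw [sub_smul, one_smul, Complex.ofReal_pow, ← Complex.mul_conj', hfix, sub_self]
  have hsq : ‖lam‖ ^ 2 = 1 := by
    exact_mod_cast sub_eq_zero.mp ((smul_eq_zero.mp this).resolve_right hc)
  exact (pow_eq_one_iff_of_nonneg (norm_nonneg _) two_ne_zero).mp hsq

lemma isSelfAdjoint_conj_smul_of_eq_sq_smul_star {c : M} {μ : ℂ} (hμ : ‖μ‖ = 1)
    (h : c = μ ^ 2 • star c) : IsSelfAdjoint (conj μ • c) := by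
  have hunit : conj μ * μ = 1 := by rw [Complex.conj_mul', hμ]; norm_num
  show star (conj μ • c) = conj μ • c
  conv_rhs => rw [h, smul_smul, sq, ← mul_assoc, hunit, one_mul]
  rw [star_smul, Complex.star_def, Complex.conj_conj]

end StarModule

section CStarAlgebra

variable {𝒜 : Type*} [CStarAlgebra 𝒜]

lemma IsSelfAdjoint.exists_mem_spectrum_ne_zero {s : 𝒜} (hs : IsSelfAdjoint s) (hs0 : s ≠ 0) :
    ∃ z ∈ spectrum ℂ s, z ≠ 0 := by
  by_contra! h
  exact hs0 (CFC.eq_zero_of_spectrum_subset_zero (R := ℂ) s h)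

lemma eq_one_of_eq_smul_star_of_spectrum_real {c : 𝒜} {lam : ℂ} (hc : c ≠ 0)
    (h : c = lam • star c) (hreal : ∀ z ∈ spectrum ℂ c, z ≠ 0 → z.im = 0) : lam = 1 := by
  obtain ⟨μ, rfl⟩ := IsAlgClosed.exists_pow_nat_eq lam two_pos
  have hμ : ‖μ‖ = 1 := by
    have := norm_eq_one_of_eq_smul_star hc h
    rwa [norm_pow, pow_eq_one_iff_of_nonneg (norm_nonneg _) two_ne_zero] at this
  have hμ0 : μ ≠ 0 := norm_ne_zero_iff.mp (by rw [hμ]; exact one_ne_zero)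
  have hS := isSelfAdjoint_conj_smul_of_eq_sq_smul_star hμ h
  obtain ⟨z, hz, hz0⟩ := hS.exists_mem_spectrum_ne_zero
    (smul_ne_zero ((map_ne_zero _).mpr hμ0) hc)
  have hc_eq : c = (Units.mk0 μ hμ0 : ℂ) • conj μ • c := by
    rw [Units.val_mk0, smul_smul, Complex.mul_conj', hμ]; simp
  have hμz : μ * z ∈ spectrum ℂ c := by
    rw [hc_eq]; exact spectrum.smul_mem_smul_iff.mpr hz
  have hμz_im := hreal _ hμz (mul_ne_zero hμ0 hz0)
  have hz_im := hS.im_eq_zero_of_mem_spectrum hz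
  have hz_re : z.re ≠ 0 := fun hre => hz0 (Complex.ext hre hz_im)
  have hμ_im : μ.im = 0 := by
    rw [Complex.mul_im, hz_im, mul_zero, zero_add] at hμz_im
    exact (mul_eq_zero.mp hμz_im).resolve_right hz_re
  calc μ ^ 2 = μ * conj μ := by rw [Complex.conj_eq_iff_im.mpr hμ_im, sq]
    _ = 1 := by rw [Complex.mul_conj', hμ]; norm_num

variable [PartialOrder 𝒜] [StarOrderedRing 𝒜]

lemma im_eq_zero_of_mem_spectrum_mul_of_nonneg {a b : 𝒜} (ha : 0 ≤ a) (hb : IsSelfAdjoint b)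
    {z : ℂ} (hz : z ∈ spectrum ℂ (a * b)) (hz0 : z ≠ 0) : z.im = 0 := by
  have hsym : IsSelfAdjoint (CFC.sqrt a * b * CFC.sqrt a) :=
    hb.conjugate_self (IsSelfAdjoint.of_nonneg (CFC.sqrt_nonneg a))
  have hmem : z ∈ spectrum ℂ (CFC.sqrt a * (CFC.sqrt a * b)) \ {0} :=
    ⟨by rwa [← mul_assoc, CFC.sqrt_mul_sqrt_self a], hz0⟩
  rw [spectrum.nonzero_mul_comm, mul_assoc] at hmem
  exact hsym.im_eq_zero_of_mem_spectrum (by simpa [mul_assoc] using hmem.1)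

end CStarAlgebra

/-- Brooke et al., part 3. If `A∘B ≠ 0`, `A∘B = λ • (B∘A)`,
both `A` and `B` are self-adjoint and at least one of them is positive, then
`λ = 1`, i.e. `A∘B = B∘A`. -/
theorem comm_conditions_selfAdjoint_positive
    {H : Type*} [NormedAddCommGroup H] [InnerProductSpace ℂ H] [CompleteSpace H]
    (A B : H →L[ℂ] H) (lam : ℂ)
    (hne : A ∘L B ≠ 0) (hcomm : A ∘L B = lam • (B ∘L A))
    (hA : IsSelfAdjoint A) (hB : IsSelfAdjoint B)
    (hpos : A.IsPositive ∨ B.IsPositive) :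
    lam = 1 ∧ A ∘L B = B ∘L A := by
  have hstar : star (A * B) = B * A := by rw [star_mul, hA.star_eq, hB.star_eq]
  have hreal : ∀ z ∈ spectrum ℂ (A * B), z ≠ 0 → z.im = 0 := by
    intro z hz hz0
    simp only [← ContinuousLinearMap.nonneg_iff_isPositive] at hpos
    rcases hpos with hA_nonneg | hB_nonneg
    · exact im_eq_zero_of_mem_spectrum_mul_of_nonneg hA_nonneg hB hz hz0
    · have hzBA : z ∈ spectrum ℂ (B * A) \ {0} :=
        spectrum.nonzero_mul_comm (𝕜 := ℂ) A B ▸ ⟨hz, hz0⟩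
      exact im_eq_zero_of_mem_spectrum_mul_of_nonneg hB_nonneg hA hzBA.1 hz0
  have hlam : lam = 1 := eq_one_of_eq_smul_star_of_spectrum_real hne (hstar ▸ hcomm) hreal
  exact ⟨hlam, by rw [hcomm, hlam, one_smul]⟩
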